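/- Pointwise nonnegativity on the region K₁ ∩ K₂ᶜ: Let c ∈ (1/2, 1] satisfy (1−c)² ≤ (2c−1)c, let r > 0, λ, σ > 0, and let y, v, x₀ ∈ ℝ^d with √c r < |(y−x₀)_k| < r. Suppose −λ(y−v)_k (y−x₀)_k (r² − (y−x₀)_k²)² ≤ (2c−1) r² (σ²/2) (y−v)_k² (y−x₀)_k². Then the combined drift-diffusion term is nonnegative: −λ(y−v)_k ∂_{x_k} φ_r(y) + (σ²/2)(y−v)_k² ∂²_{x_k} φ_r(y) ≥ 0. -/

import Mathlib

open Finset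

/-- The product mollifier `φ_r(x) = ∏_k exp(1 − r²/(r² − (x−x₀)_k²))` on the open
`ℓ∞`-ball of radius `r` around `x₀`, extended by `0` outside. -/
noncomputable def moll {d : ℕ} (r : ℝ) (x₀ x : EuclideanSpace ℝ (Fin d)) : ℝ :=
  open Classical in
  if ∀ k, |(x - x₀) k| < r then
    ∏ k, Real.exp (1 - r ^ 2 / (r ^ 2 - ((x - x₀) k) ^ 2))
  else 0

/-! Along the `k`-th coordinate line `moll` is a positive constant times the one-dimensional
factor `ψ(s) = exp (1 - r²/(r² - s²))`, whose logarithmic derivatives are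
`ψ'/ψ = -2r²s/(r² - s²)²` and `ψ''/ψ = 2r²(3s⁴ - r⁴)/(r² - s²)⁴`. The drift-diffusion term is
therefore `ψ` times `2r²/(r² - s²)⁴ · (λ w s (r² - s²)² + σ²/2 w² (3s⁴ - r⁴))`, with `w = (y - v)_k`.
The `K₂ᶜ` inequality trades the drift part for `-(2c - 1) r² σ²/2 w² s²`, and on `K₁` (`s² > c r²`)
the quartic `3S² - (2c - 1) r² S - r⁴` is nonnegative because it is increasing in `S` there and
equals `(c² + c - 1) r⁴ ≥ 0` at `S = c r²`, which is the condition `(1 - c)² ≤ (2c - 1) c`. -/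

open Filter Topology

theorem lineDeriv_add_smul_eq_of_hasDerivAt {E F : Type*} [NormedAddCommGroup E]
    [NormedSpace ℝ E] [NormedAddCommGroup F] [NormedSpace ℝ F] {f : E → F} {g : ℝ → F}
    {x v : E} {t₀ : ℝ} {g' : F} (hfg : (fun t => f (x + t • v)) =ᶠ[𝓝 t₀] g)
    (hg : HasDerivAt g g' t₀) : lineDeriv ℝ f (x + t₀ • v) v = g' := by
  have h : HasDerivAt (fun t => f (x + t • v)) g' (t₀ + 0) := by
    simpa using hg.congr_of_eventuallyEq hfg
  refine HasLineDerivAt.lineDeriv ?_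
  simpa only [HasLineDerivAt, add_assoc, ← add_smul] using h.comp_const_add t₀ 0

-- The one-dimensional factor of `moll`: `moll r x₀ x = ∏ k, bump r ((x - x₀) k)` on the ball.
noncomputable def bump (r s : ℝ) : ℝ := Real.exp (1 - r ^ 2 / (r ^ 2 - s ^ 2))

section bump

variable {r s : ℝ}

theorem bump_pos : 0 < bump r s := Real.exp_pos _

theorem hasDerivAt_bump (h : s ^ 2 < r ^ 2) :
    HasDerivAt (bump r) (-(2 * r ^ 2 * s) / (r ^ 2 - s ^ 2) ^ 2 * bump r s) s := by
  have hq : r ^ 2 - s ^ 2 ≠ 0 := by linarith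
  have hden : HasDerivAt (fun s : ℝ => r ^ 2 - s ^ 2) (-(2 * s)) s := by
    simpa using (hasDerivAt_pow 2 s).const_sub (r ^ 2)
  refine (((hasDerivAt_const s (r ^ 2)).fun_div hden hq).const_sub 1).exp.congr_deriv ?_
  rw [bump]
  field_simp
  ring

theorem hasDerivAt_bump_deriv (h : s ^ 2 < r ^ 2) :
    HasDerivAt (fun s => -(2 * r ^ 2 * s) / (r ^ 2 - s ^ 2) ^ 2 * bump r s)
      (2 * r ^ 2 * (3 * s ^ 4 - r ^ 4) / (r ^ 2 - s ^ 2) ^ 4 * bump r s) s := by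
  have hq : r ^ 2 - s ^ 2 ≠ 0 := by linarith
  have hden : HasDerivAt (fun s : ℝ => (r ^ 2 - s ^ 2) ^ 2) (2 * (r ^ 2 - s ^ 2) * -(2 * s)) s := by
    simpa using ((hasDerivAt_pow 2 s).const_sub (r ^ 2)).fun_pow 2
  have hnum : HasDerivAt (fun s : ℝ => -(2 * r ^ 2 * s)) (-(2 * r ^ 2)) s := by
    simpa using (hasDerivAt_id s).const_mul (-(2 * r ^ 2))
  refine ((hnum.fun_div hden (pow_ne_zero 2 hq)).fun_mul (hasDerivAt_bump h)).congr_deriv ?_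
  field_simp
  ring

end bump

theorem mul_le_three_mul_sq_sub_pow_four {c r S : ℝ} (hc : 0 ≤ c)
    (hcc : (1 - c) ^ 2 ≤ (2 * c - 1) * c) (hS : c * r ^ 2 ≤ S) :
    (2 * c - 1) * r ^ 2 * S ≤ 3 * S ^ 2 - r ^ 4 := by
  have key : 3 * S ^ 2 - r ^ 4 - (2 * c - 1) * r ^ 2 * S
      = (S - c * r ^ 2) * (3 * S + (c + 1) * r ^ 2) + ((2 * c - 1) * c - (1 - c) ^ 2) * r ^ 4 := by
    ring
  have h1 : 0 ≤ (S - c * r ^ 2) * (3 * S + (c + 1) * r ^ 2) :=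
    mul_nonneg (by linarith) (by nlinarith [sq_nonneg r])
  have h2 : 0 ≤ ((2 * c - 1) * c - (1 - c) ^ 2) * r ^ 4 :=
    mul_nonneg (by linarith) (by positivity)
  linarith

theorem drift_add_diffusion_coeff_nonneg {c r lam σ s w : ℝ} (hc : 0 ≤ c)
    (hcc : (1 - c) ^ 2 ≤ (2 * c - 1) * c) (hs : c * r ^ 2 ≤ s ^ 2) (hsr : s ^ 2 < r ^ 2)
    (hK2 : -lam * w * s * (r ^ 2 - s ^ 2) ^ 2 ≤
      (2 * c - 1) * r ^ 2 * (σ ^ 2 / 2) * w ^ 2 * s ^ 2) :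
    0 ≤ -lam * w * (-(2 * r ^ 2 * s) / (r ^ 2 - s ^ 2) ^ 2) +
      σ ^ 2 / 2 * w ^ 2 * (2 * r ^ 2 * (3 * s ^ 4 - r ^ 4) / (r ^ 2 - s ^ 2) ^ 4) := by
  have hq : r ^ 2 - s ^ 2 ≠ 0 := by linarith
  have hquartic := mul_le_mul_of_nonneg_left (mul_le_three_mul_sq_sub_pow_four hc hcc hs)
    (by positivity : 0 ≤ σ ^ 2 / 2 * w ^ 2)
  have hnum : 0 ≤ lam * w * s * (r ^ 2 - s ^ 2) ^ 2 + σ ^ 2 / 2 * w ^ 2 * (3 * s ^ 4 - r ^ 4) := by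
    linarith
  have heq : -lam * w * (-(2 * r ^ 2 * s) / (r ^ 2 - s ^ 2) ^ 2) +
      σ ^ 2 / 2 * w ^ 2 * (2 * r ^ 2 * (3 * s ^ 4 - r ^ 4) / (r ^ 2 - s ^ 2) ^ 4) =
      2 * r ^ 2 * (lam * w * s * (r ^ 2 - s ^ 2) ^ 2 + σ ^ 2 / 2 * w ^ 2 * (3 * s ^ 4 - r ^ 4)) /
        (r ^ 2 - s ^ 2) ^ 4 := by
    field_simp
  rw [heq]
  exact div_nonneg (mul_nonneg (by positivity) hnum) (by positivity)

section moll

variable {d : ℕ} {r : ℝ} {x₀ y : EuclideanSpace ℝ (Fin d)} {k : Fin d}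

theorem moll_add_smul_single {t : ℝ} (hball : ∀ j ≠ k, |(y - x₀) j| < r)
    (ht : |(y - x₀) k + t| < r) :
    moll r x₀ (y + t • EuclideanSpace.single k 1) =
      (∏ j ∈ univ.erase k, bump r ((y - x₀) j)) * bump r ((y - x₀) k + t) := by
  have hcoord : ∀ j, (y + t • EuclideanSpace.single k (1 : ℝ) - x₀) j =
      (y - x₀) j + if j = k then t else 0 := by
    intro j
    simp only [PiLp.sub_apply, PiLp.add_apply, PiLp.smul_apply, PiLp.single_apply,
      smul_eq_mul]
    split_ifs <;> ring
  have hin : ∀ j, |(y + t • EuclideanSpace.single k (1 : ℝ) - x₀) j| < r := by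
    intro j
    rw [hcoord]
    split_ifs with hj
    · exact hj ▸ ht
    · simpa using hball j hj
  rw [moll, if_pos hin, ← mul_prod_erase _ _ (mem_univ k), mul_comm, hcoord, if_pos rfl]
  congr 1
  refine prod_congr rfl fun j hj => ?_
  rw [hcoord, if_neg (ne_of_mem_erase hj), add_zero]
  rfl

theorem lineDeriv_moll_add_smul_single {t : ℝ} (hball : ∀ j ≠ k, |(y - x₀) j| < r)
    (ht : |(y - x₀) k + t| < r) :
    lineDeriv ℝ (moll r x₀) (y + t • EuclideanSpace.single k 1) (EuclideanSpace.single k 1) =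
      (∏ j ∈ univ.erase k, bump r ((y - x₀) j)) *
        (-(2 * r ^ 2 * ((y - x₀) k + t)) / (r ^ 2 - ((y - x₀) k + t) ^ 2) ^ 2 *
          bump r ((y - x₀) k + t)) := by
  refine lineDeriv_add_smul_eq_of_hasDerivAt (g := fun u =>
    (∏ j ∈ univ.erase k, bump r ((y - x₀) j)) * bump r ((y - x₀) k + u)) ?_ ?_
  · have hnear : ∀ᶠ u in 𝓝 t, |(y - x₀) k + u| < r :=
      (isOpen_lt (by fun_prop) continuous_const).mem_nhds ht
    filter_upwards [hnear] with u hu using moll_add_smul_single hball hu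
  · exact ((hasDerivAt_bump (sq_lt_sq' (neg_lt_of_abs_lt ht) (lt_of_abs_lt ht))).comp_const_add
      _ t).const_mul _

theorem lineDeriv_moll_single (hball : ∀ j, |(y - x₀) j| < r) :
    lineDeriv ℝ (moll r x₀) y (EuclideanSpace.single k 1) =
      (∏ j ∈ univ.erase k, bump r ((y - x₀) j)) *
        (-(2 * r ^ 2 * (y - x₀) k) / (r ^ 2 - (y - x₀) k ^ 2) ^ 2 * bump r ((y - x₀) k)) := by
  simpa using lineDeriv_moll_add_smul_single (t := 0) (fun j _ => hball j) (by simpa using hball k)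

theorem lineDeriv_lineDeriv_moll_single (hball : ∀ j, |(y - x₀) j| < r) :
    lineDeriv ℝ (fun z => lineDeriv ℝ (moll r x₀) z (EuclideanSpace.single k 1)) y
        (EuclideanSpace.single k 1) =
      (∏ j ∈ univ.erase k, bump r ((y - x₀) j)) *
        (2 * r ^ 2 * (3 * (y - x₀) k ^ 4 - r ^ 4) / (r ^ 2 - (y - x₀) k ^ 2) ^ 4 *
          bump r ((y - x₀) k)) := by
  have hk := hball k
  have hnear : ∀ᶠ u in 𝓝 0, |(y - x₀) k + u| < r :=
    (isOpen_lt (by fun_prop) continuous_const).mem_nhds (by simpa using hk)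
  have hderiv := (HasDerivAt.comp_const_add ((y - x₀) k) 0 (by
    rw [add_zero]; exact hasDerivAt_bump_deriv (sq_lt_sq' (neg_lt_of_abs_lt hk)
      (lt_of_abs_lt hk)))).const_mul (∏ j ∈ univ.erase k, bump r ((y - x₀) j))
  simpa using lineDeriv_add_smul_eq_of_hasDerivAt (x := y) (t₀ := 0)
    (f := fun z => lineDeriv ℝ (moll r x₀) z (EuclideanSpace.single k 1))
    (hnear.mono fun u hu => lineDeriv_moll_add_smul_single (fun j _ => hball j) hu) hderiv

end moll

theorem stmt13_general {d : ℕ} (c r lam σ : ℝ)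
    (hc : c ∈ Set.Ioc (1 / 2 : ℝ) 1) (hcc : (1 - c) ^ 2 ≤ (2 * c - 1) * c)
    (x₀ v y : EuclideanSpace ℝ (Fin d))
    (hball : ∀ j, |(y - x₀) j| < r) (k : Fin d)
    (hk1 : Real.sqrt c * r < |(y - x₀) k|) (hk1' : |(y - x₀) k| < r)
    (hK2 : -lam * ((y - v) k) * ((y - x₀) k) * (r ^ 2 - ((y - x₀) k) ^ 2) ^ 2 ≤
      (2 * c - 1) * r ^ 2 * (σ ^ 2 / 2) * ((y - v) k) ^ 2 * ((y - x₀) k) ^ 2) :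
    0 ≤ -lam * ((y - v) k) * lineDeriv ℝ (moll r x₀) y (EuclideanSpace.single k 1) +
        σ ^ 2 / 2 * ((y - v) k) ^ 2 *
          lineDeriv ℝ (fun z => lineDeriv ℝ (moll r x₀) z (EuclideanSpace.single k 1))
            y (EuclideanSpace.single k 1) := by
  have hc0 : 0 ≤ c := by linarith [hc.1]
  have hr : 0 ≤ r := (abs_nonneg _).trans hk1'.le
  have hsr : (y - x₀) k ^ 2 < r ^ 2 := sq_lt_sq' (neg_lt_of_abs_lt hk1') (lt_of_abs_lt hk1')
  have hs : c * r ^ 2 ≤ (y - x₀) k ^ 2 := by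
    have h := pow_le_pow_left₀ (by positivity) hk1.le 2
    rwa [mul_pow, Real.sq_sqrt hc0, sq_abs] at h
  rw [lineDeriv_moll_single hball, lineDeriv_lineDeriv_moll_single hball]
  calc 0 ≤ (∏ j ∈ univ.erase k, bump r ((y - x₀) j)) * bump r ((y - x₀) k) *
        (-lam * (y - v) k * (-(2 * r ^ 2 * (y - x₀) k) / (r ^ 2 - (y - x₀) k ^ 2) ^ 2) +
          σ ^ 2 / 2 * (y - v) k ^ 2 *
            (2 * r ^ 2 * (3 * (y - x₀) k ^ 4 - r ^ 4) / (r ^ 2 - (y - x₀) k ^ 2) ^ 4)) :=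
        mul_nonneg (mul_pos (prod_pos fun j _ => bump_pos) bump_pos).le
          (drift_add_diffusion_coeff_nonneg hc0 hcc hs hsr hK2)
    _ = _ := by ring

/-- **pointwise nonnegativity on the region `K₁ ∩ K₂ᶜ`.**
For `c ∈ (1/2,1]` with `(1−c)² ≤ (2c−1)c`, `√c r < |(y−x₀)_k| < r`, and the `K₂ᶜ`
inequality
`−λ(y−v)_k(y−x₀)_k(r²−(y−x₀)_k²)² ≤ (2c−1)r²(σ²/2)(y−v)_k²(y−x₀)_k²`,
the combined drift-diffusion term is nonnegative:
`−λ(y−v)_k ∂_{x_k}φ_r(y) + (σ²/2)(y−v)_k² ∂²_{x_k}φ_r(y) ≥ 0`. -/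
theorem stmt13 {d : ℕ} (c r lam σ : ℝ)
    (hc : c ∈ Set.Ioc (1 / 2 : ℝ) 1) (hcc : (1 - c) ^ 2 ≤ (2 * c - 1) * c)
    (hr : 0 < r) (hlam : 0 < lam) (hσ : 0 < σ)
    (x₀ v y : EuclideanSpace ℝ (Fin d))
    (hball : ∀ j, |(y - x₀) j| < r) (k : Fin d)
    (hk1 : Real.sqrt c * r < |(y - x₀) k|) (hk1' : |(y - x₀) k| < r)
    (hK2 : -lam * ((y - v) k) * ((y - x₀) k) * (r ^ 2 - ((y - x₀) k) ^ 2) ^ 2 ≤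
      (2 * c - 1) * r ^ 2 * (σ ^ 2 / 2) * ((y - v) k) ^ 2 * ((y - x₀) k) ^ 2) :
    0 ≤ -lam * ((y - v) k) * lineDeriv ℝ (moll r x₀) y (EuclideanSpace.single k 1) +
        σ ^ 2 / 2 * ((y - v) k) ^ 2 *
          lineDeriv ℝ (fun z => lineDeriv ℝ (moll r x₀) z (EuclideanSpace.single k 1))
            y (EuclideanSpace.single k 1) :=
  stmt13_general c r lam σ hc hcc x₀ v y hball k hk1 hk1' hK2
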